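/- Let a ∈ ℝ³ and 0 < s < t. Then the spatial convolution of the directional derivative of the three-dimensional heat kernel with the squared heat kernel satisfies the identity (a·∇G(t−s)) * (G(s)²) = (√(2π)/(32π²)) s^{−3/2} a·∇G(t − s/2), as functions of x ∈ ℝ³. -/

import Mathlib

open MeasureTheory Real Filter
open scoped ENNReal NNReal

/-- The `n`-dimensional Gaussian heat kernel `G(t,x) = (4πt)^{-n/2} exp(-|x|²/(4t))`. -/
noncomputable def heatG (n : ℕ) (t : ℝ) (x : EuclideanSpace ℝ (Fin n)) : ℝ :=
  (4 * π * t) ^ (-(n : ℝ) / 2) * Real.exp (-‖x‖ ^ 2 / (4 * t))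

/-- Directional derivative `a·∇f`. -/
noncomputable def dirD {n : ℕ} (a : EuclideanSpace ℝ (Fin n))
    (f : EuclideanSpace ℝ (Fin n) → ℝ) (x : EuclideanSpace ℝ (Fin n)) : ℝ :=
  fderiv ℝ f x a

/-- Partial derivative `∂_j f`. -/
noncomputable def pd {n : ℕ} (j : Fin n) (f : EuclideanSpace ℝ (Fin n) → ℝ)
    (x : EuclideanSpace ℝ (Fin n)) : ℝ :=
  fderiv ℝ f x (EuclideanSpace.single j 1)

/-- Spatial Laplacian `Δf = Σ_j ∂_j² f`. -/
noncomputable def lap {n : ℕ} (f : EuclideanSpace ℝ (Fin n) → ℝ)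
    (x : EuclideanSpace ℝ (Fin n)) : ℝ :=
  ∑ j : Fin n, pd j (fun z => pd j f z) x

/-- Multi-index spatial derivative `∇^α f = ∂_1^{α_1} ⋯ ∂_n^{α_n} f`. -/
noncomputable def mD {n : ℕ} (α : Fin n → ℕ) (f : EuclideanSpace ℝ (Fin n) → ℝ) :
    EuclideanSpace ℝ (Fin n) → ℝ :=
  (List.finRange n).foldr (fun j g => (pd j)^[α j] g) f

/-- Iterated time derivative `∂_t^l F`. -/
noncomputable def tD {n : ℕ} (l : ℕ) (F : ℝ → EuclideanSpace ℝ (Fin n) → ℝ) :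
    ℝ → EuclideanSpace ℝ (Fin n) → ℝ :=
  (fun H => fun t x => deriv (fun τ => H τ x) t)^[l] F

/-- `u` is a mild solution of `∂_t u - Δu = a·∇(u²)` with initial data `u₀`:
the Duhamel formula `u(t) = G(t)*u₀ + ∫₀ᵗ a·∇G(t-s) * u(s)² ds` holds. -/
def IsMildSolution {n : ℕ} (a : EuclideanSpace ℝ (Fin n))
    (u₀ : EuclideanSpace ℝ (Fin n) → ℝ) (u : ℝ → EuclideanSpace ℝ (Fin n) → ℝ) : Prop :=
  ∀ t : ℝ, 0 < t → ∀ x, u t x = (∫ y, heatG n t (x - y) * u₀ y) +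
    ∫ s in Set.Ioo (0:ℝ) t, ∫ y, dirD a (heatG n (t - s)) (x - y) * (u s y) ^ 2

/-- The decay exponent `γ_q = (n/2)(1 - 1/q)` (with `1/∞ = 0`). -/
noncomputable def gam (n : ℕ) (q : ℝ≥0∞) : ℝ := (n : ℝ) / 2 * (1 - 1 / q.toReal)

/-- The decay estimate `‖u(t)‖_{L^q} ≤ C(1+t)^{-γ_q}` for all `1 ≤ q ≤ ∞` and `t > 0`. -/
def SatisfiesDecay {n : ℕ} (u : ℝ → EuclideanSpace ℝ (Fin n) → ℝ) : Prop :=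
  ∀ q : ℝ≥0∞, 1 ≤ q → ∃ C : ℝ, 0 < C ∧ ∀ t : ℝ, 0 < t →
    eLpNorm (u t) q volume ≤ ENNReal.ofReal (C * (1 + t) ^ (-(gam n q)))


open scoped RealInnerProductSpace

abbrev E3 := EuclideanSpace ℝ (Fin 3)

lemma hasFDerivAt_heatG (n : ℕ) (τ : ℝ) (hτ : τ ≠ 0) (z : EuclideanSpace ℝ (Fin n)) :
    HasFDerivAt (heatG n τ)
      ((-(1 / (2 * τ)) * heatG n τ z) • (innerSL ℝ z)) z := by
  have h1 : HasFDerivAt (fun x : EuclideanSpace ℝ (Fin n) => ‖x‖ ^ 2)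
      (2 • (innerSL ℝ z)) z := by
    simpa using (hasFDerivAt_id z).norm_sq
  have h2 : HasFDerivAt (fun x : EuclideanSpace ℝ (Fin n) => -‖x‖ ^ 2 / (4 * τ))
      ((-(1 / (4 * τ))) • (2 • (innerSL ℝ z))) z := by
    have := h1.const_mul (-(1 / (4 * τ)))
    refine this.congr_of_eventuallyEq (Filter.Eventually.of_forall fun x => ?_)
    ring
  have h3 := h2.exp
  have h4 := h3.const_mul ((4 * π * τ) ^ (-(n : ℝ) / 2))
  refine h4.congr_fderiv ?_
  ext v; simp [heatG, smul_smul]; ring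

lemma dirD_heatG (n : ℕ) (τ : ℝ) (hτ : τ ≠ 0) (a z : EuclideanSpace ℝ (Fin n)) :
    dirD a (heatG n τ) z = -(⟪z, a⟫ / (2 * τ)) * heatG n τ z := by
  rw [dirD, (hasFDerivAt_heatG n τ hτ z).fderiv]
  simp
  ring

lemma integrable_gauss {β : ℝ} (hβ : 0 < β) :
    Integrable (fun y : E3 => rexp (-β * ‖y‖ ^ 2)) := by
  have h := (GaussianFourier.integrable_cexp_neg_mul_sq_norm_add (V := E3) (b := (β : ℂ))
      (by simpa using hβ) 0 (0 : E3)).norm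
  convert h using 2 with y
  simp [Complex.norm_exp, ← Complex.ofReal_pow]

lemma integrable_inner_gauss {β : ℝ} (hβ : 0 < β) (a : E3) :
    Integrable (fun y : E3 => ⟪y, a⟫ * rexp (-β * ‖y‖ ^ 2)) := by
  refine ((integrable_gauss (β := β/2) (by positivity)).const_mul
      (‖a‖ * (1 + 2/β))).mono' ?_ ?_
  · exact (Continuous.inner continuous_id continuous_const).mul
      ((continuous_const.mul (continuous_norm.pow 2)).rexp) |>.aestronglyMeasurable
  · filter_upwards with y
    have hu : (0:ℝ) ≤ ‖y‖ := norm_nonneg _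
    have h1 : |⟪y, a⟫| ≤ ‖y‖ * ‖a‖ := abs_real_inner_le_norm y a
    have h2 : rexp (-β * ‖y‖^2) = rexp (-(β/2) * ‖y‖^2) * rexp (-(β/2) * ‖y‖^2) := by
      rw [← Real.exp_add]; ring_nf
    have h3 : ‖y‖ * rexp (-(β/2) * ‖y‖^2) ≤ 1 + 2/β := by
      have he : (β/2) * ‖y‖^2 + 1 ≤ rexp ((β/2) * ‖y‖^2) := by
        simpa using Real.add_one_le_exp ((β/2) * ‖y‖^2)
      rw [show -(β/2) * ‖y‖^2 = -((β/2) * ‖y‖^2) by ring, Real.exp_neg]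
      rw [mul_inv_le_iff₀' (Real.exp_pos _)]
      have h4 : (0:ℝ) < 2/β := by positivity
      have hts : (2/β) * (β/2 * ‖y‖^2) = ‖y‖^2 := by field_simp
      nlinarith [sq_nonneg (‖y‖ - 1), mul_le_mul_of_nonneg_left he h4.le]
    have hp : (0:ℝ) < rexp (-(β/2) * ‖y‖^2) := Real.exp_pos _
    calc ‖⟪y, a⟫ * rexp (-β * ‖y‖^2)‖ = |⟪y, a⟫| * rexp (-β * ‖y‖^2) := by
          rw [norm_mul]; simp [abs_of_pos (Real.exp_pos _)]
      _ ≤ (‖y‖ * ‖a‖) * rexp (-β * ‖y‖^2) := by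
          exact mul_le_mul_of_nonneg_right h1 (Real.exp_pos _).le
      _ = ‖a‖ * (‖y‖ * rexp (-(β/2) * ‖y‖^2)) * rexp (-(β/2) * ‖y‖^2) := by
          rw [h2]; ring
      _ ≤ ‖a‖ * (1 + 2/β) * rexp (-(β/2) * ‖y‖^2) := by
          have := mul_le_mul_of_nonneg_left h3 (norm_nonneg a)
          exact mul_le_mul_of_nonneg_right this hp.le

lemma integral_odd_gauss {β : ℝ} (a : E3) :
    ∫ y : E3, ⟪y, a⟫ * rexp (-β * ‖y‖ ^ 2) = 0 := by
  simp_rw [neg_mul]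
  have h := integral_neg_eq_self (fun y : E3 => ⟪y, a⟫ * rexp (-(β * ‖y‖ ^ 2))) volume
  simp only [inner_neg_left, norm_neg, neg_mul] at h
  rw [integral_neg] at h
  linarith

lemma integral_inner_gauss {β : ℝ} (hβ : 0 < β) (a m w : E3) :
    ∫ y : E3, ⟪w - y, a⟫ * rexp (-β * ‖y - m‖ ^ 2) =
      ⟪w - m, a⟫ * (π / β) ^ ((3:ℝ)/2) := by
  have key : ∫ y : E3, ⟪w - y, a⟫ * rexp (-β * ‖y - m‖ ^ 2) =
      ∫ z : E3, ⟪w - m - z, a⟫ * rexp (-β * ‖z‖ ^ 2) := by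
    rw [← integral_sub_right_eq_self (μ := volume)
      (fun z : E3 => ⟪w - m - z, a⟫ * rexp (-β * ‖z‖ ^ 2)) m]
    congr 1 with y
    rw [sub_sub_sub_cancel_right]
  rw [key]
  have : ∀ z : E3, ⟪w - m - z, a⟫ * rexp (-β * ‖z‖ ^ 2) =
      ⟪w - m, a⟫ * rexp (-β * ‖z‖ ^ 2) - ⟪z, a⟫ * rexp (-β * ‖z‖ ^ 2) := by
    intro z; rw [inner_sub_left]; ring
  simp_rw [this]
  rw [integral_sub ((integrable_gauss hβ).const_mul _) (integrable_inner_gauss hβ a),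
    integral_odd_gauss, sub_zero, integral_const_mul,
    GaussianFourier.integral_rexp_neg_mul_sq_norm (V := E3) hβ]
  norm_num [finrank_euclideanSpace_fin]

lemma conv_gauss (τ σ : ℝ) (hτ : 0 < τ) (hσ : 0 < σ) (a x : E3) :
    ∫ y : E3, dirD a (heatG 3 τ) (x - y) * heatG 3 σ y = dirD a (heatG 3 (τ + σ)) x := by
  have hπ : 0 < π := Real.pi_pos
  have hτσ : 0 < τ + σ := by linarith
  have hβ : 0 < (τ + σ) / (4 * τ * σ) := by positivity
  set β := (τ + σ) / (4 * τ * σ) with hβdef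
  set m : E3 := (σ / (τ + σ)) • x with hmdef
  set K : ℝ := -(1 / (2 * τ)) * ((4 * π * τ) ^ (-(3:ℝ)/2) * (4 * π * σ) ^ (-(3:ℝ)/2)
      * rexp (-‖x‖ ^ 2 / (4 * (τ + σ)))) with hKdef
  have hpt : ∀ y : E3, dirD a (heatG 3 τ) (x - y) * heatG 3 σ y
      = K * (⟪x - y, a⟫ * rexp (-β * ‖y - m‖ ^ 2)) := by
    intro y
    have hexp : rexp (-‖x - y‖ ^ 2 / (4 * τ)) * rexp (-‖y‖ ^ 2 / (4 * σ))
        = rexp (-β * ‖y - m‖ ^ 2) * rexp (-‖x‖ ^ 2 / (4 * (τ + σ))) := by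
      rw [← Real.exp_add, ← Real.exp_add]
      congr 1
      have h1 : ‖x - y‖ ^ 2 = ‖x‖ ^ 2 - 2 * ⟪x, y⟫ + ‖y‖ ^ 2 := norm_sub_sq_real x y
      have h2 : ‖y - m‖ ^ 2 = ‖y‖ ^ 2 - 2 * ((σ / (τ + σ)) * ⟪x, y⟫)
          + (σ / (τ + σ)) ^ 2 * ‖x‖ ^ 2 := by
        rw [norm_sub_sq_real, hmdef, real_inner_smul_right, norm_smul, real_inner_comm]
        rw [Real.norm_eq_abs, abs_of_pos (by positivity), mul_pow]
      rw [h1, h2, hβdef]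
      field_simp
      ring
    rw [dirD_heatG 3 τ hτ.ne' a (x - y)]
    simp only [heatG, Nat.cast_ofNat, hKdef]
    linear_combination (-(⟪x - y, a⟫ / (2 * τ)) * (4 * π * τ) ^ (-(3:ℝ)/2)
      * (4 * π * σ) ^ (-(3:ℝ)/2)) * hexp
  simp_rw [hpt]
  rw [integral_const_mul, integral_inner_gauss hβ a m x]
  rw [dirD_heatG 3 (τ + σ) hτσ.ne' a x]
  have hxm : ⟪x - m, a⟫ = (τ / (τ + σ)) * ⟪x, a⟫ := by
    rw [inner_sub_left, hmdef, real_inner_smul_left]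
    field_simp
    ring
  have key : (4 * π * τ) ^ (-(3:ℝ)/2) * (4 * π * σ) ^ (-(3:ℝ)/2) * (π / β) ^ ((3:ℝ)/2)
      = (4 * π * (τ + σ)) ^ (-(3:ℝ)/2) := by
    have e1 : (π / β) ^ ((3:ℝ)/2) = ((π / β)⁻¹) ^ (-((3:ℝ)/2)) := by
      rw [Real.rpow_neg (by positivity), Real.inv_rpow (by positivity), inv_inv]
    simp only [neg_div]
    rw [e1, ← Real.mul_rpow (by positivity) (by positivity),
      ← Real.mul_rpow (by positivity) (by positivity)]
    congr 1
    rw [hβdef]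
    field_simp
  simp only [heatG, Nat.cast_ofNat, hKdef]
  rw [hxm, ← key]
  field_simp

lemma sq_heatG (s : ℝ) (hs : 0 < s) (y : EuclideanSpace ℝ (Fin 3)) :
    heatG 3 s y ^ 2 = (Real.sqrt (2 * π) / (32 * π ^ 2) * s ^ (-(3:ℝ)/2)) * heatG 3 (s/2) y := by
  have hπ : 0 < π := Real.pi_pos
  simp only [heatG, Nat.cast_ofNat, mul_pow]
  have he : rexp (-‖y‖ ^ 2 / (4 * s)) ^ 2 = rexp (-‖y‖ ^ 2 / (4 * (s/2))) := by
    rw [sq, ← Real.exp_add]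
    congr 1
    field_simp
    ring
  rw [he]
  have hc : ((4 * π * s) ^ (-(3:ℝ) / 2)) ^ 2
      = Real.sqrt (2 * π) / (32 * π ^ 2) * s ^ (-(3:ℝ)/2) * (4 * π * (s/2)) ^ (-(3:ℝ)/2) := by
    have h1 : 4 * π * (s/2) = 2 * π * s := by ring
    have h2 : ((4 * π * s) ^ (-(3:ℝ) / 2)) ^ 2 = (4 * π * s) ^ (-(3:ℝ)) := by
      rw [← Real.rpow_natCast ((4 * π * s) ^ (-(3:ℝ)/2)) 2, ← Real.rpow_mul (by positivity)]
      norm_num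
    have h3 : s ^ (-(3:ℝ)/2) * (2 * π * s) ^ (-(3:ℝ)/2) = (2*π) ^ (-(3:ℝ)/2) * s ^ (-(3:ℝ)) := by
      rw [← Real.mul_rpow hs.le (by positivity)]
      rw [show s * (2 * π * s) = (2*π) * s^(2:ℕ) by ring]
      rw [Real.mul_rpow (by positivity) (by positivity),
        ← Real.rpow_natCast s 2, ← Real.rpow_mul hs.le]
      norm_num
    rw [h1, h2, mul_assoc (Real.sqrt (2*π)/(32*π^2)), h3]
    have h4 : (4 * π * s) ^ (-(3:ℝ)) = (4*π) ^ (-(3:ℝ)) * s ^ (-(3:ℝ)) := by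
      rw [show 4 * π * s = (4*π) * s by ring, Real.mul_rpow (by positivity) hs.le]
    rw [h4]
    have h5 : (4*π) ^ (-(3:ℝ)) = Real.sqrt (2 * π) / (32 * π ^ 2) * (2*π) ^ (-(3:ℝ)/2) := by
      have h6 : (2*π) ^ (-(3:ℝ)/2) = (2 * π * Real.sqrt (2*π))⁻¹ := by
        rw [show (-(3:ℝ)/2) = -(1 + 1/2) by norm_num, Real.rpow_neg (by positivity),
          Real.rpow_add (by positivity), Real.rpow_one, ← Real.sqrt_eq_rpow]
      have h7 : (4*π) ^ (-(3:ℝ)) = ((4*π) ^ (3:ℕ))⁻¹ := by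
        rw [Real.rpow_neg (by positivity)]
        rw [← Real.rpow_natCast]; norm_num
      rw [h6, h7]
      have hq : Real.sqrt (2*π) > 0 := Real.sqrt_pos.mpr (by positivity)
      field_simp
      ring
    rw [h5]
    ring
  rw [hc]
  ring

/-- convolution identity
`(a·∇G(t−s)) * G(s)² = (√(2π)/(32π²)) s^{−3/2} a·∇G(t − s/2)` on ℝ³. -/
theorem conv_identity (a : EuclideanSpace ℝ (Fin 3)) (s t : ℝ) (hs : 0 < s) (hst : s < t) :
    ∀ x : EuclideanSpace ℝ (Fin 3),
      (∫ y, dirD a (heatG 3 (t - s)) (x - y) * (heatG 3 s y) ^ 2) =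
        Real.sqrt (2 * π) / (32 * π ^ 2) * s ^ (-(3 : ℝ) / 2) *
          dirD a (heatG 3 (t - s / 2)) x := by
  intro x
  have hts : 0 < t - s := by linarith
  have hC : (0:ℝ) ≤ 1 := zero_le_one
  calc (∫ y, dirD a (heatG 3 (t - s)) (x - y) * (heatG 3 s y) ^ 2)
      = ∫ y, (Real.sqrt (2 * π) / (32 * π ^ 2) * s ^ (-(3:ℝ)/2)) *
          (dirD a (heatG 3 (t - s)) (x - y) * heatG 3 (s/2) y) := by
        congr 1 with y
        rw [sq_heatG s hs]
        ring
    _ = (Real.sqrt (2 * π) / (32 * π ^ 2) * s ^ (-(3:ℝ)/2)) *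
          ∫ y, dirD a (heatG 3 (t - s)) (x - y) * heatG 3 (s/2) y :=
        integral_const_mul _ _
    _ = (Real.sqrt (2 * π) / (32 * π ^ 2) * s ^ (-(3:ℝ)/2)) *
          dirD a (heatG 3 ((t - s) + s/2)) x := by
        rw [conv_gauss (t - s) (s/2) hts (by positivity) a x]
    _ = Real.sqrt (2 * π) / (32 * π ^ 2) * s ^ (-(3 : ℝ) / 2) *
          dirD a (heatG 3 (t - s / 2)) x := by
        rw [show (t - s) + s/2 = t - s/2 by ring]
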